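/- Let R ≤ A(M)^m be a computational subpower with D-part 𝒟(R) = { i : R(i) ∩ D ≠ ∅ } nonempty, and suppose every index i ∈ [m] lies in both 𝒟(R) and ℋ(R) = { i : R(≠i) is halting }. Then there exist vectors (σ_i)_{i∈[m]} in R with σ_i(i) = ⟨1,·⟩ and σ_i(j) = ⟨1,0⟩ for j ≠ i; in particular R has capacity m−1. -/

import Mathlib

namespace AMPaper

inductive Cnt
  | dot | times | zero | A | B
deriving DecidableEq

inductive Reg
  | A | B
deriving DecidableEq

/-- A Minsky machine instruction for a machine with states `{0,…,N}`:
`inc R j` is `(i,R,j)` and `dec R k j` is `(i,R,k,j)`. -/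
inductive Instr (N : ℕ)
  | inc : Reg → Fin (N + 1) → Instr N
  | dec : Reg → Fin (N + 1) → Fin (N + 1) → Instr N

/-- A Minsky machine with states `{0,…,N}` and exactly one instruction per state. -/
structure Minsky (N : ℕ) where
  instr : Fin (N + 1) → Instr N

/-- Elements of the universe `A(M)`: pairs `⟨i,c⟩` of a state and a content. -/
abbrev El (N : ℕ) := Fin (N + 1) × Cnt

/-- The content corresponding to a register. -/
def regCnt : Reg → Cnt
  | .A => Cnt.A
  | .B => Cnt.B

/-- The helper function `X(⟨i,c⟩) = ⟨i,×⟩`. -/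
def Xf {N : ℕ} (x : El N) : El N := (x.1, Cnt.times)

/-- The semilattice meet. -/
def meet {N : ℕ} (x y : El N) : El N :=
  if x = y then x else (min x.1 y.1, Cnt.times)

/-- The order induced by the meet: `x ≤ y` iff `x ∧ y = x`. -/
def elLe {N : ℕ} (x y : El N) : Prop := meet x y = x

/-- The operation `M(x,y)` of `A(M)`. -/
def Mop {N : ℕ} (m : Minsky N) (x y : El N) : El N :=
  if x.1 = y.1 then
    match m.instr x.1 with
    | .inc R j =>
        if x.2 = Cnt.dot ∧ y.2 = Cnt.zero then (j, regCnt R)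
        else if x.2 = Cnt.zero ∧ y.2 = Cnt.dot then (j, Cnt.dot)
        else if x = y ∧ x.2 ≠ Cnt.dot then (j, x.2)
        else (j, Cnt.times)
    | .dec R _ j =>
        if x.2 = Cnt.dot ∧ y.2 = regCnt R then (j, Cnt.zero)
        else if x.2 = regCnt R ∧ y.2 = Cnt.dot then (j, Cnt.dot)
        else if x = y ∧ x.2 ≠ Cnt.dot then (j, x.2)
        else (j, Cnt.times)
  else Xf y

/-- The operation `M'(x)` of `A(M)`. -/
def M'op {N : ℕ} (m : Minsky N) (x : El N) : El N :=
  match m.instr x.1 with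
  | .dec R k _ => if x.2 = regCnt R then (k, Cnt.times) else (k, x.2)
  | .inc _ _ => Xf x

/-- The operation `I(x,y)` of `A(M)`. -/
def Iop {N : ℕ} (x y : El N) : El N :=
  if x.2 = Cnt.dot then ((1 : Fin (N + 1)), Cnt.dot)
  else if y.2 = Cnt.zero ∨ y.2 = Cnt.A ∨ y.2 = Cnt.B then ((1 : Fin (N + 1)), Cnt.zero)
  else ((1 : Fin (N + 1)), Cnt.times)

/-- The operation `H(x)` of `A(M)`. -/
def Hop {N : ℕ} (x : El N) : El N :=
  if x = ((0 : Fin (N + 1)), Cnt.zero) ∨ x = ((0 : Fin (N + 1)), Cnt.dot)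
  then ((0 : Fin (N + 1)), Cnt.zero)
  else ((0 : Fin (N + 1)), Cnt.times)

/-- The operation `N₀(x,y,z)` of `A(M)`. -/
def N0op {N : ℕ} (x y z : El N) : El N :=
  if x = ((0 : Fin (N + 1)), Cnt.dot) ∧ y.1 = z.1 then y
  else if x = ((0 : Fin (N + 1)), Cnt.zero) ∧ z.2 ≠ Cnt.dot ∧ y.1 = z.1 then z
  else Xf (meet y z)

/-- The operation `S(x,y,z)` of `A(M)`. -/
def Sop {N : ℕ} (x y z : El N) : El N :=
  if x = ((1 : Fin (N + 1)), Cnt.zero) ∧ y.1 = (1 : Fin (N + 1)) ∧ z.1 = (1 : Fin (N + 1)) ∧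
      ((y.2 = Cnt.dot ∧ z.2 = Cnt.zero) ∨ (y.2 = Cnt.zero ∧ z.2 = Cnt.dot) ∨
        (y.2 = Cnt.zero ∧ z.2 = Cnt.zero))
  then ((1 : Fin (N + 1)), Cnt.zero)
  else ((1 : Fin (N + 1)), Cnt.times)

/-- The operation `N·(u,x,y,z)` of `A(M)`. -/
def Ndotop {N : ℕ} (u x y z : El N) : El N :=
  if x = y ∧ x.2 ≠ Cnt.times ∧ x.1 = z.1 then x
  else if u.2 = Cnt.dot ∧ y.2 = Cnt.times ∧ x.1 = y.1 ∧ y.1 = z.1 then x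
  else if u.2 = Cnt.dot ∧ x.2 = Cnt.times ∧ x.1 = y.1 ∧ y.1 = z.1 then y
  else if u.2 = Cnt.dot ∧ (z = x ∨ z = y) ∧ x.1 = y.1 ∧ y.1 = z.1 then z
  else Xf (meet x (meet y z))

/-- The operation `P(u,v,x,y)` of `A(M)`. -/
def Pop {N : ℕ} (u v x y : El N) : El N :=
  if u.1 = v.1 then x else y

/-- A subset `R ⊆ A(M)^ι` is a subpower if it is closed under all nine
fundamental operations of `A(M)` applied coordinatewise. -/
def IsSubpower {N : ℕ} (m : Minsky N) {ι : Type} (R : Set (ι → El N)) : Prop :=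
  (∀ a ∈ R, ∀ b ∈ R, (fun i => meet (a i) (b i)) ∈ R) ∧
  (∀ a ∈ R, ∀ b ∈ R, (fun i => Mop m (a i) (b i)) ∈ R) ∧
  (∀ a ∈ R, (fun i => M'op m (a i)) ∈ R) ∧
  (∀ a ∈ R, ∀ b ∈ R, (fun i => Iop (a i) (b i)) ∈ R) ∧
  (∀ a ∈ R, (fun i => Hop (a i)) ∈ R) ∧
  (∀ a ∈ R, ∀ b ∈ R, ∀ c ∈ R, (fun i => N0op (a i) (b i) (c i)) ∈ R) ∧
  (∀ a ∈ R, ∀ b ∈ R, ∀ c ∈ R, (fun i => Sop (a i) (b i) (c i)) ∈ R) ∧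
  (∀ u ∈ R, ∀ a ∈ R, ∀ b ∈ R, ∀ c ∈ R, (fun i => Ndotop (u i) (a i) (b i) (c i)) ∈ R) ∧
  (∀ u ∈ R, ∀ v ∈ R, ∀ a ∈ R, ∀ b ∈ R, (fun i => Pop (u i) (v i) (a i) (b i)) ∈ R)

/-- A tuple is synchronized if its state is constant across coordinates. -/
def Sync {N : ℕ} {ι : Type} (r : ι → El N) : Prop :=
  ∀ i j : ι, (r i).1 = (r j).1

/-- The subpower of `A(M)^ι` generated by a set `G`. -/
def Sg {N : ℕ} (m : Minsky N) {ι : Type} (G : Set (ι → El N)) : Set (ι → El N) :=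
  {x | ∀ R : Set (ι → El N), IsSubpower m R → G ⊆ R → x ∈ R}

/-- `R` is computational: synchronized and every element has at most one
coordinate with content `·`. -/
def Computational {N : ℕ} {m : ℕ} (R : Set (Fin m → El N)) : Prop :=
  (∀ r ∈ R, Sync r) ∧
  ∀ r ∈ R, ∀ i j : Fin m, (r i).2 = Cnt.dot → (r j).2 = Cnt.dot → i = j

/-- The dot part `𝒟(R)`. -/
def Dpart {N : ℕ} {m : ℕ} (R : Set (Fin m → El N)) : Set (Fin m) :=
  {i | ∃ r ∈ R, (r i).2 = Cnt.dot}

/-- `i ∈ ℋ(R)` iff the projection `R(≠ i)` is halting, i.e. some `r ∈ R` has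
all coordinates other than `i` in `{⟨0,0⟩, ⟨0,·⟩}` with at least one `⟨0,·⟩`. -/
def Hpart {N : ℕ} {m : ℕ} (R : Set (Fin m → El N)) : Set (Fin m) :=
  {i | ∃ r ∈ R,
    (∀ j, j ≠ i → r j = ((0 : Fin (N + 1)), Cnt.zero) ∨
      r j = ((0 : Fin (N + 1)), Cnt.dot)) ∧
    ∃ j, j ≠ i ∧ r j = ((0 : Fin (N + 1)), Cnt.dot)}

/-- The vector `σ_i` of the statement. -/
def unitDot {N m : ℕ} (i : Fin m) : Fin m → El N :=
  fun j => if j = i then ((1 : Fin (N + 1)), Cnt.dot) else ((1 : Fin (N + 1)), Cnt.zero)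

theorem Hop_eq_zero_zero_of_halting {N : ℕ} {x : El N}
    (hx : x = ((0 : Fin (N + 1)), Cnt.zero) ∨ x = ((0 : Fin (N + 1)), Cnt.dot)) :
    Hop x = ((0 : Fin (N + 1)), Cnt.zero) := by
  simp [Hop, hx]

theorem Iop_of_dot {N : ℕ} {x : El N} (y : El N) (hx : x.2 = Cnt.dot) :
    Iop x y = ((1 : Fin (N + 1)), Cnt.dot) := by
  simp [Iop, hx]

theorem Iop_of_ne_dot_of_zero {N : ℕ} {x y : El N} (hx : x.2 ≠ Cnt.dot) (hy : y.2 = Cnt.zero) :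
    Iop x y = ((1 : Fin (N + 1)), Cnt.zero) := by
  simp [Iop, hx, hy]

/-- With `s ∈ R` having `s(i) ∈ D` and `r ∈ R` witnessing that `R(≠i)` halts, `σ_i = I(s, H(r))`:
`H` sends `r(j)` to `⟨0,0⟩` for `j ≠ i`, and `s(j) ∉ D` there since `R` is computational. -/
theorem unitDot_mem {N m : ℕ} {mm : Minsky N} {R : Set (Fin m → El N)}
    (hsub : IsSubpower mm R) (hcomp : Computational R) {i : Fin m}
    (hD : i ∈ Dpart R) (hH : i ∈ Hpart R) : unitDot i ∈ R := by
  obtain ⟨s, hsR, hsi⟩ := hD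
  obtain ⟨r, hrR, hr, -⟩ := hH
  have hI : (fun j => Iop (s j) (Hop (r j))) ∈ R := hsub.2.2.2.1 s hsR _ (hsub.2.2.2.2.1 r hrR)
  convert hI using 1
  funext j
  by_cases hj : j = i
  · subst hj
    simp [unitDot, Iop_of_dot _ hsi]
  · have hsj : (s j).2 ≠ Cnt.dot := fun h => hj (hcomp.2 s hsR j i h hsi)
    rw [Iop_of_ne_dot_of_zero hsj (by rw [Hop_eq_zero_zero_of_halting (hr j hj)])]
    simp [unitDot, hj]

theorem unitDot_ne_times {N m : ℕ} (i j : Fin m) : (unitDot (N := N) i j).2 ≠ Cnt.times := by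
  unfold unitDot
  split_ifs <;> simp

/-- If `R ≤ A(M)^m` is a computational subpower with `𝒟(R)` nonempty and every
index lies in `𝒟(R) ∩ ℋ(R)`, then `R` contains vectors `σ_i` with
`σ_i(i) = ⟨1,·⟩` and `σ_i(j) = ⟨1,0⟩` for `j ≠ i`; in particular `R` has
capacity `m − 1`. -/
theorem capacity_witnesses {N : ℕ} (mm : Minsky N) {m : ℕ}
    (R : Set (Fin m → El N)) (hsub : IsSubpower mm R)
    (hcomp : Computational R)
    (hDne : (Dpart R).Nonempty)
    (hall : ∀ i : Fin m, i ∈ Dpart R ∧ i ∈ Hpart R) :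
    (∃ σ : Fin m → Fin m → El N, ∀ i : Fin m,
      σ i ∈ R ∧ σ i i = ((1 : Fin (N + 1)), Cnt.dot) ∧
      ∀ j, j ≠ i → σ i j = ((1 : Fin (N + 1)), Cnt.zero)) ∧
    (Set.ncard {i : Fin m |
        ∃ r ∈ R, (∀ j, (r j).2 ≠ Cnt.times) ∧ (r i).2 = Cnt.dot})
      > m - 1 := by
  have hmem (i : Fin m) : unitDot i ∈ R := unitDot_mem hsub hcomp (hall i).1 (hall i).2
  refine ⟨⟨unitDot, fun i => ⟨hmem i, by simp [unitDot], fun j hj => by simp [unitDot, hj]⟩⟩, ?_⟩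
  have huniv : {i : Fin m |
      ∃ r ∈ R, (∀ j, (r j).2 ≠ Cnt.times) ∧ (r i).2 = Cnt.dot} = Set.univ :=
    Set.eq_univ_of_forall fun i => ⟨unitDot i, hmem i, unitDot_ne_times i, by simp [unitDot]⟩
  obtain ⟨i₀, -⟩ := hDne
  rw [huniv, Set.ncard_univ, Nat.card_fin]
  have := i₀.pos
  omega

end AMPaper
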